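/- Let a ∈ L²(Ω) be nonnegative, g, c ∈ L²(Ω;ℝⁿ), and λ > 0. Define d* ∈ L²(Ω;ℝⁿ) pointwise by d*(x) := max(|c(x)+g(x)| − a(x)/λ, 0) · (c(x)+g(x))/|c(x)+g(x)| − g(x) when c(x)+g(x) ≠ 0, and d*(x) := −g(x) when c(x)+g(x) = 0. Then d* belongs to L²(Ω;ℝⁿ) and is the unique minimizer over L²(Ω;ℝⁿ) of the functional I(d) := ∫_Ω a(x)|d(x)+g(x)| dx + (λ/2)‖c − d‖², where ‖·‖ is the L²(Ω;ℝⁿ) norm. -/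

import Mathlib

/-!
Pointwise, `shrink t w` is the proximal point of `t ‖·‖` at `w`: the residual `w - shrink t w`
has norm at most `t` and is aligned with `shrink t w`, so it is a subgradient of `t ‖·‖` there.
Expanding `‖w - u‖²` around `shrink t w` then gives the three-point inequality
`t ‖s‖ + ½‖w - s‖² + ½‖u - s‖² ≤ t ‖u‖ + ½‖w - u‖²`. Applied with `t = a x / λ`, `w = c + g`,
`u = d + g` and integrated, it shows `I d* + (λ/2)‖d - d*‖² ≤ I d`, which gives minimality and,
since the quadratic term vanishes only if `d = d*` a.e., uniqueness.
-/

open MeasureTheory RealInnerProductSpace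

section Shrink

variable {E : Type*} [NormedAddCommGroup E] [NormedSpace ℝ E]

/-- Soft thresholding of `w` at level `t` (`shrink t 0 = 0` through `0 / 0 = 0`). -/
noncomputable def shrink (t : ℝ) (w : E) : E := (max (‖w‖ - t) 0 / ‖w‖) • w

@[simp]
theorem shrink_zero (t : ℝ) : shrink t (0 : E) = 0 := by simp [shrink]

theorem shrink_of_norm_le {t : ℝ} {w : E} (h : ‖w‖ ≤ t) : shrink t w = 0 := by
  simp [shrink, max_eq_right (sub_nonpos.2 h)]

theorem shrink_of_lt_norm {t : ℝ} {w : E} (h : t < ‖w‖) :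
    shrink t w = (1 - t / ‖w‖) • w := by
  rcases eq_or_ne w 0 with rfl | hw
  · simp
  rw [shrink, max_eq_left (sub_nonneg.2 h.le), sub_div, div_self (norm_ne_zero_iff.2 hw)]

theorem sub_shrink_of_lt_norm {t : ℝ} {w : E} (h : t < ‖w‖) :
    w - shrink t w = (t / ‖w‖) • w := by
  rw [shrink_of_lt_norm h, sub_smul, one_smul, sub_sub_cancel]

theorem norm_shrink_le {t : ℝ} (ht : 0 ≤ t) (w : E) : ‖shrink t w‖ ≤ ‖w‖ := by
  rcases le_or_gt ‖w‖ t with h | h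
  · simp [shrink_of_norm_le h]
  · have hw : 0 < ‖w‖ := ht.trans_lt h
    rw [shrink_of_lt_norm h, norm_smul, Real.norm_eq_abs,
      abs_of_nonneg (sub_nonneg.2 ((div_le_one hw).2 h.le))]
    exact mul_le_of_le_one_left hw.le (by linarith [div_nonneg ht hw.le])

theorem norm_sub_shrink_le {t : ℝ} (ht : 0 ≤ t) (w : E) : ‖w - shrink t w‖ ≤ t := by
  rcases le_or_gt ‖w‖ t with h | h
  · simpa [shrink_of_norm_le h] using h
  · have hw : 0 < ‖w‖ := ht.trans_lt h
    rw [sub_shrink_of_lt_norm h, norm_smul, Real.norm_of_nonneg (div_nonneg ht hw.le),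
      div_mul_cancel₀ t hw.ne']

end Shrink

section ShrinkInner

variable {E : Type*} [NormedAddCommGroup E] [InnerProductSpace ℝ E]

theorem inner_sub_shrink_shrink (t : ℝ) (w : E) :
    ⟪w - shrink t w, shrink t w⟫ = t * ‖shrink t w‖ := by
  rcases le_or_gt ‖w‖ t with h | h
  · simp [shrink_of_norm_le h]
  · rcases eq_or_ne w 0 with rfl | hw0
    · simp
    have hw : 0 < ‖w‖ := norm_pos_iff.2 hw0
    rw [sub_shrink_of_lt_norm h, shrink_of_lt_norm h, real_inner_smul_left, real_inner_smul_right,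
      real_inner_self_eq_norm_sq, norm_smul, Real.norm_eq_abs,
      abs_of_nonneg (sub_nonneg.2 ((div_le_one hw).2 h.le))]
    field_simp

theorem mul_norm_shrink_add_sq_le {t : ℝ} (ht : 0 ≤ t) (w u : E) :
    t * ‖shrink t w‖ + ‖w - shrink t w‖ ^ 2 / 2 + ‖u - shrink t w‖ ^ 2 / 2 ≤
      t * ‖u‖ + ‖w - u‖ ^ 2 / 2 := by
  set s := shrink t w
  have hexpand : ‖w - u‖ ^ 2 = ‖w - s‖ ^ 2 - 2 * ⟪w - s, u - s⟫ + ‖u - s‖ ^ 2 := by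
    rw [← norm_sub_sq_real, sub_sub_sub_cancel_right]
  have hsubgrad : ⟪w - s, u⟫ ≤ t * ‖u‖ :=
    (real_inner_le_norm _ _).trans
      (mul_le_mul_of_nonneg_right (norm_sub_shrink_le ht w) (norm_nonneg u))
  rw [hexpand, inner_sub_right, inner_sub_shrink_shrink]
  linarith

end ShrinkInner

namespace MeasureTheory

variable {α : Type*} [MeasurableSpace α] {μ : Measure α}

section Measurability

variable {E : Type*} [NormedAddCommGroup E] [NormedSpace ℝ E]

theorem AEStronglyMeasurable.shrink {t : α → ℝ} {w : α → E} (ht : AEStronglyMeasurable t μ)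
    (hw : AEStronglyMeasurable w μ) : AEStronglyMeasurable (fun x => shrink (t x) (w x)) μ := by
  have hcoeff : AEMeasurable (fun x => max (‖w x‖ - t x) 0 / ‖w x‖) μ := by
    have := hw.norm.aemeasurable
    have := ht.aemeasurable
    fun_prop
  exact hcoeff.aestronglyMeasurable.smul hw

theorem MemLp.shrink {p : ENNReal} {t : α → ℝ} {w : α → E} (hw : MemLp w p μ)
    (ht : AEStronglyMeasurable t μ) (ht0 : ∀ᵐ x ∂μ, 0 ≤ t x) :
    MemLp (fun x => shrink (t x) (w x)) p μ :=
  hw.of_le (ht.shrink hw.1) (ht0.mono fun x hx => norm_shrink_le hx (w x))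

theorem memLp_shrink_div_const {p : ENNReal} {a : α → ℝ} {lam : ℝ} {w : α → E}
    (hw : MemLp w p μ) (ha : AEStronglyMeasurable a μ) (ha0 : ∀ᵐ x ∂μ, 0 ≤ a x) (hlam : 0 ≤ lam) :
    MemLp (fun x => shrink (a x / lam) (w x)) p μ :=
  hw.shrink (ha.aemeasurable.div_const lam).aestronglyMeasurable
    (ha0.mono fun _ hx => div_nonneg hx hlam)

end Measurability

section Objective

variable {E : Type*} [NormedAddCommGroup E]

noncomputable def shrinkageObjective (μ : Measure α) (a : α → ℝ) (lam : ℝ) (w v : α → E) : ℝ :=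
  (∫ x, a x * ‖v x‖ ∂μ) + lam / 2 * ∫ x, ‖w x - v x‖ ^ 2 ∂μ

variable [InnerProductSpace ℝ E] {a : α → ℝ} {lam : ℝ} {w v : α → E}

theorem shrinkageObjective_shrink_add_le (ha : MemLp a 2 μ) (ha0 : ∀ᵐ x ∂μ, 0 ≤ a x)
    (hlam : 0 < lam) (hw : MemLp w 2 μ) (hv : MemLp v 2 μ) :
    shrinkageObjective μ a lam w (fun x => shrink (a x / lam) (w x)) +
        lam / 2 * ∫ x, ‖v x - shrink (a x / lam) (w x)‖ ^ 2 ∂μ ≤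
      shrinkageObjective μ a lam w v := by
  set s := fun x => shrink (a x / lam) (w x)
  have hs : MemLp s 2 μ := memLp_shrink_div_const hw ha.1 ha0 hlam.le
  have hpointwise : ∀ᵐ x ∂μ,
      a x * ‖s x‖ + lam / 2 * ‖w x - s x‖ ^ 2 + lam / 2 * ‖v x - s x‖ ^ 2 ≤
        a x * ‖v x‖ + lam / 2 * ‖w x - v x‖ ^ 2 := by
    filter_upwards [ha0] with x hx
    calc _ = lam * (a x / lam * ‖s x‖ + ‖w x - s x‖ ^ 2 / 2 + ‖v x - s x‖ ^ 2 / 2) := by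
          field_simp
      _ ≤ lam * (a x / lam * ‖v x‖ + ‖w x - v x‖ ^ 2 / 2) :=
          mul_le_mul_of_nonneg_left
            (mul_norm_shrink_add_sq_le (div_nonneg hx hlam.le) (w x) (v x)) hlam.le
      _ = _ := by field_simp
  have hs_int : Integrable (fun x => a x * ‖s x‖) μ := ha.integrable_mul hs.norm
  have hv_int : Integrable (fun x => a x * ‖v x‖) μ := ha.integrable_mul hv.norm
  have hws_int : Integrable (fun x => lam / 2 * ‖w x - s x‖ ^ 2) μ :=
    ((hw.sub hs).norm.integrable_sq).const_mul (lam / 2)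
  have hvs_int : Integrable (fun x => lam / 2 * ‖v x - s x‖ ^ 2) μ :=
    ((hv.sub hs).norm.integrable_sq).const_mul (lam / 2)
  have hwv_int : Integrable (fun x => lam / 2 * ‖w x - v x‖ ^ 2) μ :=
    ((hw.sub hv).norm.integrable_sq).const_mul (lam / 2)
  have hsws_int : Integrable (fun x => a x * ‖s x‖ + lam / 2 * ‖w x - s x‖ ^ 2) μ :=
    hs_int.add hws_int
  calc _ = ∫ x, (a x * ‖s x‖ + lam / 2 * ‖w x - s x‖ ^ 2 + lam / 2 * ‖v x - s x‖ ^ 2) ∂μ := by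
        rw [integral_add hsws_int hvs_int, integral_add hs_int hws_int,
          integral_const_mul, integral_const_mul, shrinkageObjective]
    _ ≤ ∫ x, (a x * ‖v x‖ + lam / 2 * ‖w x - v x‖ ^ 2) ∂μ :=
        integral_mono_ae (hsws_int.add hvs_int) (hv_int.add hwv_int) hpointwise
    _ = _ := by rw [integral_add hv_int hwv_int, integral_const_mul, shrinkageObjective]

theorem shrinkageObjective_shrink_le (ha : MemLp a 2 μ) (ha0 : ∀ᵐ x ∂μ, 0 ≤ a x)
    (hlam : 0 < lam) (hw : MemLp w 2 μ) (hv : MemLp v 2 μ) :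
    shrinkageObjective μ a lam w (fun x => shrink (a x / lam) (w x)) ≤
      shrinkageObjective μ a lam w v := by
  have := shrinkageObjective_shrink_add_le ha ha0 hlam hw hv
  have : 0 ≤ lam / 2 * ∫ x, ‖v x - shrink (a x / lam) (w x)‖ ^ 2 ∂μ := by positivity
  linarith

theorem ae_eq_shrink_of_shrinkageObjective_eq (ha : MemLp a 2 μ) (ha0 : ∀ᵐ x ∂μ, 0 ≤ a x)
    (hlam : 0 < lam) (hw : MemLp w 2 μ) (hv : MemLp v 2 μ)
    (heq : shrinkageObjective μ a lam w v =
      shrinkageObjective μ a lam w (fun x => shrink (a x / lam) (w x))) :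
    v =ᵐ[μ] fun x => shrink (a x / lam) (w x) := by
  have hle := shrinkageObjective_shrink_add_le ha ha0 hlam hw hv
  have hzero : ∫ x, ‖v x - shrink (a x / lam) (w x)‖ ^ 2 ∂μ = 0 := by
    have : 0 ≤ ∫ x, ‖v x - shrink (a x / lam) (w x)‖ ^ 2 ∂μ := by positivity
    nlinarith
  have hint := (hv.sub (memLp_shrink_div_const hw ha.1 ha0 hlam.le)).norm.integrable_sq
  filter_upwards [(integral_eq_zero_iff_of_nonneg (fun x => by positivity) hint).1 hzero]
    with x hx
  simpa [sub_eq_zero] using hx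

end Objective

end MeasureTheory

open Classical in
theorem stmt_8_general {n : ℕ}
    (μ : Measure (EuclideanSpace ℝ (Fin n)))
    (a : EuclideanSpace ℝ (Fin n) → ℝ) (ha2 : MemLp a 2 μ) (ha0 : ∀ᵐ x ∂μ, 0 ≤ a x)
    (g c : EuclideanSpace ℝ (Fin n) → EuclideanSpace ℝ (Fin n))
    (hg : MemLp g 2 μ) (hc : MemLp c 2 μ)
    (lam : ℝ) (hlam : 0 < lam)
    (dstar : EuclideanSpace ℝ (Fin n) → EuclideanSpace ℝ (Fin n))
    (hdstar : ∀ x, dstar x =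
      if c x + g x = 0 then -g x
      else ((max (‖c x + g x‖ - a x / lam) 0) / ‖c x + g x‖) • (c x + g x) - g x)
    (I : (EuclideanSpace ℝ (Fin n) → EuclideanSpace ℝ (Fin n)) → ℝ)
    (hI : ∀ d, I d = (∫ x, a x * ‖d x + g x‖ ∂μ) + lam / 2 * ∫ x, ‖c x - d x‖ ^ 2 ∂μ) :
    MemLp dstar 2 μ ∧
    (∀ d, MemLp d 2 μ → I dstar ≤ I d) ∧
    (∀ d, MemLp d 2 μ → I d = I dstar → d =ᵐ[μ] dstar) := by
  set s := fun x => shrink (a x / lam) ((c + g) x)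
  have hdstar_eq : dstar = s - g := funext fun x => by
    rw [hdstar]
    split_ifs with h
    · simp [s, h]
    · rfl
  have hI_eq : ∀ d, I d = shrinkageObjective μ a lam (c + g) (d + g) := fun d => by
    simp only [hI, shrinkageObjective, Pi.add_apply, add_sub_add_right_eq_sub]
  have hI_dstar : I dstar = shrinkageObjective μ a lam (c + g) s := by
    rw [hI_eq, hdstar_eq, sub_add_cancel]
  have hcg := hc.add hg
  refine ⟨hdstar_eq ▸ (memLp_shrink_div_const hcg ha2.1 ha0 hlam.le).sub hg, fun d hd => ?_,
    fun d hd hId => ?_⟩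
  · rw [hI_dstar, hI_eq]
    exact shrinkageObjective_shrink_le ha2 ha0 hlam hcg (hd.add hg)
  · have hae := ae_eq_shrink_of_shrinkageObjective_eq ha2 ha0 hlam hcg (hd.add hg)
      (by rw [← hI_eq, ← hI_dstar, hId])
    filter_upwards [hae] with x hx
    rw [hdstar_eq]
    exact eq_sub_of_add_eq hx

open Classical in
/-- shrinkage solution of the d-update step: With
`d*(x) = max(|c+g| - a/λ, 0)·(c+g)/|c+g| - g` (and `d* = -g` where `c+g = 0`),
`d*` lies in `L²(Ω;ℝⁿ)` and is the unique (up to a.e. equality) minimizer over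
`L²(Ω;ℝⁿ)` of `I(d) = ∫ a|d+g| + (λ/2)‖c - d‖²`. -/
theorem stmt_8 {n : ℕ} (hn : 2 ≤ n) (Ω : Set (EuclideanSpace ℝ (Fin n)))
    (hΩopen : IsOpen Ω) (hΩbdd : Bornology.IsBounded Ω)
    (μ : Measure (EuclideanSpace ℝ (Fin n))) (hμ : μ = volume.restrict Ω)
    (a : EuclideanSpace ℝ (Fin n) → ℝ) (ha2 : MemLp a 2 μ) (ha0 : ∀ᵐ x ∂μ, 0 ≤ a x)
    (g c : EuclideanSpace ℝ (Fin n) → EuclideanSpace ℝ (Fin n))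
    (hg : MemLp g 2 μ) (hc : MemLp c 2 μ)
    (lam : ℝ) (hlam : 0 < lam)
    (dstar : EuclideanSpace ℝ (Fin n) → EuclideanSpace ℝ (Fin n))
    (hdstar : ∀ x, dstar x =
      if c x + g x = 0 then -g x
      else ((max (‖c x + g x‖ - a x / lam) 0) / ‖c x + g x‖) • (c x + g x) - g x)
    (I : (EuclideanSpace ℝ (Fin n) → EuclideanSpace ℝ (Fin n)) → ℝ)
    (hI : ∀ d, I d = (∫ x, a x * ‖d x + g x‖ ∂μ) + lam / 2 * ∫ x, ‖c x - d x‖ ^ 2 ∂μ) :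
    MemLp dstar 2 μ ∧
    (∀ d, MemLp d 2 μ → I dstar ≤ I d) ∧
    (∀ d, MemLp d 2 μ → I d = I dstar → d =ᵐ[μ] dstar) :=
  stmt_8_general μ a ha2 ha0 g c hg hc lam hlam dstar hdstar I hI
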